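/- Let X be a simple random variable (finitely many values, all with rational probabilities) with Q_2(X) = m/n ∈ (1/(k+1), 1/k]. Then the law of X can be written as a convex combination (1-τ)·(average of K probability measures, each uniform on k+1 points pairwise at distance ≥ 2) + τ·(average of L probability measures, each uniform on k points pairwise at distance ≥ 2), where τ = k(k+1)m/n - k. -/

import Mathlib

open MeasureTheory ProbabilityTheory
open scoped ENNReal NNReal

/-- The Lévy concentration function `Q_h(μ) = sup_x μ((x, x+h])`. -/
noncomputable def conc (μ : Measure ℝ) (h : ℝ) : ℝ≥0∞ :=
  ⨆ x : ℝ, μ (Set.Ioc x (x + h))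


/-- A probability measure on ℝ, uniform on j points whose pairwise distances are ≥ 2. -/
def IsUniformSep (j : ℕ) (μ : Measure ℝ) : Prop :=
  ∃ s : Finset ℝ, s.card = j ∧ (∀ a ∈ s, ∀ b ∈ s, a ≠ b → 2 ≤ |a - b|) ∧
    μ = ((j : ℝ≥0∞))⁻¹ • ∑ y ∈ s, Measure.dirac y

/-!
Clearing denominators, `μ` is the empirical measure `N⁻¹ ∑_{i<N} δ_{x_i}` of a sorted sequence
`x_0 ≤ ⋯ ≤ x_{N-1}` with `N = nD`, and `Q_2(μ) = M / N` with `M = mD`. No interval `(a, a + 2]`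
contains more than `M` of the points, so `x_i + 2 ≤ x_{i+M}`: the points indexed by a residue
class mod `M` are pairwise at distance `≥ 2`. Since `N = kM + R` with `R = (n - km)D < M`, the
first `R` classes have `k + 1` points and the other `L = M - R` have `k`; averaging over them
gives the two families, with weights `(k + 1)R / N = 1 - τ` and `kL / N = τ`.
-/

open Finset

theorem natCast_card_smul_inv_smul_sum {α β : Type*} [AddCommMonoid β] [Module ℝ≥0∞ β]
    (F : Finset α) (f : α → β) :
    (#F : ℝ≥0∞) • ((#F : ℝ≥0∞)⁻¹ • ∑ a ∈ F, f a) = ∑ a ∈ F, f a := by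
  rcases F.eq_empty_or_nonempty with rfl | hF
  · simp
  · rw [smul_smul, ENNReal.mul_inv_cancel (by simpa using hF.ne_empty)
      (ENNReal.natCast_ne_top _), one_smul]

theorem Finset.exists_pos_forall_eq_intCast_div {ι : Type*} (s : Finset ι) (q : ι → ℚ) :
    ∃ D : ℕ, 0 < D ∧ ∀ i ∈ s, ∃ z : ℤ, q i = z / D := by
  have hD : 0 < ∏ i ∈ s, (q i).den := prod_pos fun i _ => (q i).pos
  refine ⟨_, hD, fun i hi => ?_⟩
  obtain ⟨e, he⟩ := dvd_prod_of_mem (fun i => (q i).den) hi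
  have he0 : (e : ℚ) ≠ 0 := by rintro h; simp_all
  refine ⟨(q i).num * e, ?_⟩
  rw [he]
  push_cast
  rw [mul_div_mul_right _ _ he0, Rat.num_div_den]

theorem ENNReal.ofReal_intCast (z : ℤ) : ENNReal.ofReal z = z.toNat := by
  rcases le_or_gt 0 z with hz | hz
  · lift z to ℕ using hz
    simp
  · have hz' : (z : ℝ) ≤ 0 := by exact_mod_cast hz.le
    simp [ENNReal.ofReal_of_nonpos hz', Int.toNat_of_nonpos hz.le]

theorem nat_bounds_of_div_mem_Ioc {m n k : ℕ}
    (h : (m : ℝ) / n ∈ Set.Ioc (1 / ((k : ℝ) + 1)) (1 / (k : ℝ))) :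
    0 < n ∧ k * m ≤ n ∧ n < (k + 1) * m := by
  obtain ⟨hlow, hhigh⟩ := h
  have hn : 0 < n := by
    rcases Nat.eq_zero_or_pos n with rfl | hn
    · simp only [Nat.cast_zero, div_zero] at hlow
      linarith [show (0 : ℝ) < 1 / ((k : ℝ) + 1) by positivity]
    · exact hn
  have hnR : (0 : ℝ) < n := by exact_mod_cast hn
  refine ⟨hn, ?_, ?_⟩
  · have hkm : (k : ℝ) * (m / n) ≤ 1 :=
      calc (k : ℝ) * (m / n) ≤ k * (1 / k) := by gcongr
        _ ≤ 1 := by rw [mul_one_div]; exact div_self_le_one _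
    rw [mul_div_assoc', div_le_one hnR] at hkm
    exact_mod_cast hkm
  · have := (div_lt_div_iff₀ (by positivity) hnR).mp hlow
    exact_mod_cast (by linarith : (n : ℝ) < ((k : ℝ) + 1) * m)

theorem exists_multiset_eq_inv_card_smul_sum_dirac (μ : Measure ℝ) [IsProbabilityMeasure μ]
    {s : Finset ℝ} (hs : μ (↑s)ᶜ = 0) (hrat : ∀ y : ℝ, ∃ q : ℚ, μ {y} = ENNReal.ofReal q) :
    ∃ T : Multiset ℝ, μ = (Multiset.card T : ℝ≥0∞)⁻¹ • (T.map Measure.dirac).sum := by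
  choose q hq using hrat
  obtain ⟨D, hD, hz⟩ := s.exists_pos_forall_eq_intCast_div q
  choose! z hz using hz
  have hD0 : (D : ℝ≥0∞) ≠ 0 := by exact_mod_cast hD.ne'
  set T := ∑ y ∈ s, Multiset.replicate (z y).toNat y
  have hT : (T.map Measure.dirac).sum = (D : ℝ≥0∞) • μ := by
    have hsum := map_sum (Multiset.sumAddMonoidHom.comp (Multiset.mapAddMonoidHom Measure.dirac))
      (fun y => Multiset.replicate (z y).toNat y) s
    simp only [AddMonoidHom.coe_comp, Function.comp_apply, Multiset.coe_mapAddMonoidHom,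
      Multiset.coe_sumAddMonoidHom, Multiset.map_replicate, Multiset.sum_replicate] at hsum
    rw [hsum, Measure.ae_mem_finset_iff.mp (ae_iff.mpr hs), Finset.smul_sum]
    refine sum_congr rfl fun y hy => ?_
    rw [hq, hz y hy, smul_smul, ← Nat.cast_smul_eq_nsmul ℝ≥0∞]
    push_cast
    rw [ENNReal.ofReal_div_of_pos (by exact_mod_cast hD), ENNReal.ofReal_natCast,
      ENNReal.ofReal_intCast, ENNReal.mul_div_cancel hD0 (ENNReal.natCast_ne_top D)]
  have hcard : (Multiset.card T : ℝ≥0∞) = D := by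
    have huniv : ∀ U : Multiset ℝ, (U.map Measure.dirac).sum Set.univ = Multiset.card U := by
      intro U
      induction U using Multiset.induction <;> simp_all [add_comm]
    simpa [hT] using (huniv T).symm
  refine ⟨T, ?_⟩
  rw [hcard, hT, smul_smul, ENNReal.inv_mul_cancel hD0 (ENNReal.natCast_ne_top D), one_smul]

theorem Multiset.exists_monotoneOn_sum_map_eq {α β : Type*} [LinearOrder α] [Inhabited α]
    [AddCommMonoid β] (T : Multiset α) (f : α → β) :
    ∃ x : ℕ → α, MonotoneOn x (Set.Iio (card T)) ∧
      (T.map f).sum = ∑ i ∈ Finset.range (card T), f (x i) := by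
  set l := T.sort (· ≤ ·)
  have hl : (l : Multiset α) = T := sort_eq _ _
  have hlen : card T = l.length := by rw [← hl, coe_card]
  refine ⟨fun i => l.getD i default, fun i hi j hj hij => ?_, ?_⟩
  · rw [Set.mem_Iio, hlen] at hi hj
    simp only [List.getD_eq_getElem _ _ hi, List.getD_eq_getElem _ _ hj]
    exact (pairwise_sort T _).rel_get_of_le (a := ⟨i, hi⟩) (b := ⟨j, hj⟩) hij
  · rw [hlen, ← Fin.sum_univ_eq_sum_range, ← hl, map_coe, sum_coe, ← Fin.sum_univ_fun_getElem]
    simp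

theorem exists_monotoneOn_eq_inv_smul_sum_dirac (μ : Measure ℝ) [IsProbabilityMeasure μ]
    {s : Finset ℝ} (hs : μ (↑s)ᶜ = 0) (hrat : ∀ y : ℝ, ∃ q : ℚ, μ {y} = ENNReal.ofReal q)
    {n : ℕ} (hn : 0 < n) :
    ∃ D : ℕ, 0 < D ∧ ∃ x : ℕ → ℝ, MonotoneOn x (Set.Iio (n * D)) ∧
      μ = ((n * D : ℕ) : ℝ≥0∞)⁻¹ • ∑ i ∈ range (n * D), Measure.dirac (x i) := by
  obtain ⟨T, hT⟩ := exists_multiset_eq_inv_card_smul_sum_dirac μ hs hrat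
  have hT0 : 0 < Multiset.card T := by
    refine Multiset.card_pos.mpr fun h => ?_
    simpa [h] using congrArg (· Set.univ) hT
  obtain ⟨x, hmono, hsum⟩ := (n • T).exists_monotoneOn_sum_map_eq Measure.dirac
  rw [Multiset.card_nsmul] at hmono hsum
  refine ⟨_, hT0, x, hmono, ?_⟩
  rw [← hsum, Multiset.map_nsmul, Multiset.sum_nsmul, ← Nat.cast_smul_eq_nsmul ℝ≥0∞, smul_smul,
    Nat.cast_mul, ENNReal.mul_inv (by simp) (by simp), mul_right_comm,
    ENNReal.inv_mul_cancel (by exact_mod_cast hn.ne') (ENNReal.natCast_ne_top n), one_mul, hT]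

theorem Finset.sum_range_eq_sum_sum_filter_modEq {β : Type*} [AddCommMonoid β] (f : ℕ → β)
    (N : ℕ) {M : ℕ} (hM : 0 < M) :
    ∑ i ∈ range N, f i = ∑ r ∈ range M, ∑ i ∈ range N with i ≡ r [MOD M], f i := by
  rw [← sum_fiberwise_of_maps_to (g := (· % M)) fun i _ => mem_range.mpr (Nat.mod_lt i hM)]
  refine sum_congr rfl fun r hr => ?_
  simp only [Nat.ModEq, Nat.mod_eq_of_lt (mem_range.mp hr)]

section Separation

variable {x : ℕ → ℝ} {N M : ℕ} {h : ℝ}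

theorem card_filter_Ioc_le_of_conc_le (hN : 0 < N)
    (hQ : conc (((N : ℝ≥0∞))⁻¹ • ∑ i ∈ range N, Measure.dirac (x i)) h ≤ M / N) (a : ℝ) :
    #{i ∈ range N | x i ∈ Set.Ioc a (a + h)} ≤ M := by
  have hle := (le_iSup (fun b => (((N : ℝ≥0∞))⁻¹ • ∑ i ∈ range N, Measure.dirac (x i))
    (Set.Ioc b (b + h))) a).trans hQ
  simp only [Measure.smul_apply, Measure.coe_finsetSum, Finset.sum_apply,
    Measure.dirac_apply' _ measurableSet_Ioc, Set.indicator_apply, Pi.one_apply,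
    sum_boole, smul_eq_mul, ENNReal.div_eq_inv_mul] at hle
  exact_mod_cast (ENNReal.mul_le_mul_iff_right (by simp) (by simpa using hN.ne')).mp hle

theorem add_le_of_card_filter_Ioc_le (hmono : MonotoneOn x (Set.Iio N))
    (hcount : ∀ a, #{i ∈ range N | x i ∈ Set.Ioc a (a + h)} ≤ M) {i : ℕ} (hi : i + M < N) :
    x i + h ≤ x (i + M) := by
  by_contra! hlt
  have hsub :
      Icc i (i + M) ⊆ {j ∈ range N | x j ∈ Set.Ioc (x (i + M) - h) (x (i + M) - h + h)} := by
    intro j hj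
    rw [mem_Icc] at hj
    simp only [mem_filter, mem_range, Set.mem_Ioc, sub_add_cancel]
    refine ⟨by omega, ?_, hmono (by simp; omega) (by simpa) hj.2⟩
    linarith [hmono (by simp; omega) (by simp; omega) hj.1]
  have := (card_le_card hsub).trans (hcount _)
  simp only [Nat.card_Icc] at this
  omega

theorem add_le_of_modEq (hmono : MonotoneOn x (Set.Iio N))
    (hsep : ∀ i, i + M < N → x i + h ≤ x (i + M)) {i j : ℕ} (hij : i < j) (hj : j < N)
    (hmod : i ≡ j [MOD M]) :
    x i + h ≤ x j := by
  have hMj : M ≤ j - i := Nat.le_of_dvd (by omega) ((Nat.modEq_iff_dvd' hij.le).mp hmod)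
  calc x i + h ≤ x (i + M) := hsep i (by omega)
    _ ≤ x j := hmono (by simp; omega) (by simpa) (by omega)

theorem le_abs_sub_of_modEq (hmono : MonotoneOn x (Set.Iio N))
    (hsep : ∀ i, i + M < N → x i + h ≤ x (i + M)) {i j : ℕ} (hi : i < N) (hj : j < N)
    (hne : i ≠ j) (hmod : i ≡ j [MOD M]) : h ≤ |x i - x j| := by
  rcases hne.lt_or_gt with hij | hji
  · have := add_le_of_modEq hmono hsep hij hj hmod
    rw [abs_sub_comm]
    exact le_abs.mpr (Or.inl (by linarith))
  · have := add_le_of_modEq hmono hsep hji hi hmod.symm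
    exact le_abs.mpr (Or.inl (by linarith))

theorem exists_isUniformSep_decomposition {k R L : ℕ} (hN : N = k * M + R) (hM : M = R + L)
    (hL : 0 < L) (hmono : MonotoneOn x (Set.Iio N))
    (hsep : ∀ i, i + M < N → x i + 2 ≤ x (i + M)) :
    ∃ (ν₁ : Fin R → Measure ℝ) (ν₂ : Fin L → Measure ℝ),
      (∀ l, IsUniformSep (k + 1) (ν₁ l)) ∧ (∀ l, IsUniformSep k (ν₂ l)) ∧
      ∑ i ∈ range N, Measure.dirac (x i)
        = ((k + 1 : ℕ) : ℝ≥0∞) • ∑ l, ν₁ l + (k : ℝ≥0∞) • ∑ l, ν₂ l := by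
  let I : ℕ → Finset ℕ := fun r => {i ∈ range N | i ≡ r [MOD M]}
  let G : ℕ → Finset ℝ := fun r => (I r).image x
  have hsep' : ∀ r, ∀ i ∈ I r, ∀ j ∈ I r, i ≠ j → 2 ≤ |x i - x j| := by
    simp only [I, mem_filter, mem_range]
    exact fun r i hi j hj hne =>
      le_abs_sub_of_modEq hmono hsep hi.1 hj.1 hne (hi.2.trans hj.2.symm)
  have hinj : ∀ r, Set.InjOn x (I r) := fun r i hi j hj hxij => by
    by_contra hne
    have := hsep' r i hi j hj hne
    rw [hxij, sub_self, abs_zero] at this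
    norm_num at this
  have hG_sep : ∀ r, ∀ a ∈ G r, ∀ b ∈ G r, a ≠ b → 2 ≤ |a - b| := by
    simp only [G, mem_image]
    rintro r _ ⟨i, hi, rfl⟩ _ ⟨j, hj, rfl⟩ hne
    exact hsep' r i hi j hj (fun hij => hne (hij ▸ rfl))
  have hG_card : ∀ r < M, #(G r) = if r < R then k + 1 else k := fun r hr => by
    rw [card_image_of_injOn (hinj r), ← Nat.count_eq_card_filter_range,
      Nat.count_modEq_card _ (by omega), Nat.mod_eq_of_lt hr, hN, add_comm (k * M),
      Nat.add_mul_div_right _ _ (by omega), Nat.add_mul_mod_self_right,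
      Nat.div_eq_of_lt (by omega), Nat.mod_eq_of_lt (by omega)]
    split_ifs <;> omega
  have hG_sum : ∀ r, ∑ i ∈ range N with i ≡ r [MOD M], Measure.dirac (x i)
      = ∑ y ∈ G r, Measure.dirac y := fun r => (sum_image (hinj r)).symm
  have hG₁ : ∀ l : Fin R, #(G l) = k + 1 := fun l => by
    rw [hG_card l (by omega), if_pos l.2]
  have hG₂ : ∀ l : Fin L, #(G (R + l)) = k := fun l => by
    rw [hG_card (R + l) (by omega), if_neg (by omega)]
  refine ⟨fun l => (#(G l) : ℝ≥0∞)⁻¹ • ∑ y ∈ G l, Measure.dirac y,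
    fun l => (#(G (R + l)) : ℝ≥0∞)⁻¹ • ∑ y ∈ G (R + l), Measure.dirac y,
    fun l => ⟨G l, hG₁ l, hG_sep l, by simp only [hG₁]⟩,
    fun l => ⟨G (R + l), hG₂ l, hG_sep (R + l), by simp only [hG₂]⟩, ?_⟩
  have hsplit := sum_range_add (fun r => ∑ y ∈ G r, Measure.dirac y) R L
  rw [← hM] at hsplit
  rw [sum_range_eq_sum_sum_filter_modEq _ N (by omega : 0 < M)]
  simp only [hG_sum]
  rw [hsplit, smul_sum, smul_sum]
  congr 1
  · rw [← Fin.sum_univ_eq_sum_range (fun r => ∑ y ∈ G r, Measure.dirac y) R]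
    refine sum_congr rfl fun l _ => ?_
    rw [← hG₁ l, natCast_card_smul_inv_smul_sum]
  · rw [← Fin.sum_univ_eq_sum_range (fun l => ∑ y ∈ G (R + l), Measure.dirac y) L]
    refine sum_congr rfl fun l _ => ?_
    rw [← hG₂ l, natCast_card_smul_inv_smul_sum]

end Separation

theorem exists_isUniformSep (j : ℕ) : ∃ ν, IsUniformSep j ν := by
  refine ⟨_, (range j).image (fun t : ℕ => 2 * (t : ℝ)),
    (card_image_of_injective _ fun a b hab => by simpa using hab).trans (card_range j), ?_, rfl⟩
  simp only [mem_image, mem_range]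
  rintro _ ⟨a, -, rfl⟩ _ ⟨b, -, rfl⟩ hab
  have hne : a ≠ b := fun h => hab (h ▸ rfl)
  rw [le_abs]
  rcases hne.lt_or_gt with h | h
  · have : (a : ℝ) + 1 ≤ b := by exact_mod_cast h
    exact Or.inr (by linarith)
  · have : (b : ℝ) + 1 ≤ a := by exact_mod_cast h
    exact Or.inl (by linarith)

/-- When `K = 0` the weight `t` vanishes, so a one-element family replaces the empty `ν`. -/
theorem exists_pos_isUniformSep_ofReal_smul_eq {j K N : ℕ} (ν : Fin K → Measure ℝ)
    (hν : ∀ l, IsUniformSep j (ν l)) {t : ℝ} (ht : t * N = j * K) (hN : 0 < N) :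
    ∃ K' > 0, ∃ ν' : Fin K' → Measure ℝ, (∀ l, IsUniformSep j (ν' l)) ∧
      ENNReal.ofReal t • ((K' : ℝ≥0∞)⁻¹ • ∑ l, ν' l)
        = (N : ℝ≥0∞)⁻¹ • ((j : ℝ≥0∞) • ∑ l, ν l) := by
  have hNR : (0 : ℝ) < N := by exact_mod_cast hN
  obtain rfl : t = j * K / N := eq_div_of_mul_eq hNR.ne' ht
  rcases K.eq_zero_or_pos with rfl | hK
  · obtain ⟨ν₀, hν₀⟩ := exists_isUniformSep j
    exact ⟨1, one_pos, fun _ => ν₀, fun _ => hν₀, by simp⟩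
  · refine ⟨K, hK, ν, hν, ?_⟩
    have hKR : (0 : ℝ) < K := by exact_mod_cast hK
    rw [smul_smul, smul_smul, ← ENNReal.ofReal_natCast K, ← ENNReal.ofReal_natCast N,
      ← ENNReal.ofReal_natCast j, ← ENNReal.ofReal_inv_of_pos hKR,
      ← ENNReal.ofReal_inv_of_pos hNR, ← ENNReal.ofReal_mul (by positivity),
      ← ENNReal.ofReal_mul (by positivity)]
    congr 2
    field_simp

theorem representation_lemma_general (μ : Measure ℝ) [IsProbabilityMeasure μ]
    (hsimple : ∃ s : Finset ℝ, μ (↑s)ᶜ = 0 ∧ ∀ y : ℝ, ∃ q : ℚ, μ {y} = ENNReal.ofReal (q : ℝ))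
    (m n k : ℕ)
    (hQ : conc μ 2 = ENNReal.ofReal ((m : ℝ) / n))
    (hrange : (m : ℝ) / n ∈ Set.Ioc (1 / ((k : ℝ) + 1)) (1 / (k : ℝ))) :
    ∃ (K L : ℕ), 0 < K ∧ 0 < L ∧
    ∃ (μ₁ : Fin K → Measure ℝ) (μ₂ : Fin L → Measure ℝ),
      (∀ l, IsUniformSep (k + 1) (μ₁ l)) ∧ (∀ l, IsUniformSep k (μ₂ l)) ∧
      μ = ENNReal.ofReal (1 - ((k : ℝ) * (k + 1) * m / n - k)) •
            ((K : ℝ≥0∞)⁻¹ • ∑ l, μ₁ l)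
        + ENNReal.ofReal ((k : ℝ) * (k + 1) * m / n - k) •
            ((L : ℝ≥0∞)⁻¹ • ∑ l, μ₂ l) := by
  obtain ⟨s, hs, hrat⟩ := hsimple
  obtain ⟨hn, hkm, hmk⟩ := nat_bounds_of_div_mem_Ioc hrange
  obtain ⟨D, hD, x, hmono, hμ⟩ := exists_monotoneOn_eq_inv_smul_sum_dirac μ hs hrat hn
  have hQ' : conc (((n * D : ℕ) : ℝ≥0∞)⁻¹ • ∑ i ∈ range (n * D), Measure.dirac (x i)) 2
      ≤ (m * D : ℕ) / (n * D : ℕ) := by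
    rw [← hμ, hQ, ENNReal.ofReal_div_of_pos (by exact_mod_cast hn), ENNReal.ofReal_natCast,
      ENNReal.ofReal_natCast, Nat.cast_mul, Nat.cast_mul,
      ENNReal.mul_div_mul_right _ _ (by exact_mod_cast hD.ne') (ENNReal.natCast_ne_top D)]
  obtain ⟨ν₁, ν₂, hν₁, hν₂, hsum⟩ := exists_isUniformSep_decomposition (M := m * D)
    (R := (n - k * m) * D) (L := ((k + 1) * m - n) * D)
    (by rw [← mul_assoc, ← add_mul, Nat.add_sub_cancel' hkm])
    (by rw [← add_mul]; congr 1; have := add_one_mul k m; omega)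
    (Nat.mul_pos (by omega) hD) hmono
    fun i hi => add_le_of_card_filter_Ioc_le hmono
      (card_filter_Ioc_le_of_conc_le (by positivity) hQ') hi
  have hτ : ((k : ℝ) * (k + 1) * m / n - k) * (n * D : ℕ)
      = k * (((k + 1) * m - n) * D : ℕ) := by
    have : (n : ℝ) ≠ 0 := by positivity
    push_cast [Nat.cast_sub hmk.le]
    field_simp
  have hτ' : (1 - ((k : ℝ) * (k + 1) * m / n - k)) * (n * D : ℕ)
      = (k + 1 : ℕ) * ((n - k * m) * D : ℕ) := by
    have : (n : ℝ) ≠ 0 := by positivity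
    push_cast [Nat.cast_sub hkm]
    field_simp
    ring
  obtain ⟨K, hK, μ₁, hμ₁, h₁⟩ := exists_pos_isUniformSep_ofReal_smul_eq ν₁ hν₁ hτ' (by positivity)
  obtain ⟨L, hL, μ₂, hμ₂, h₂⟩ := exists_pos_isUniformSep_ofReal_smul_eq ν₂ hν₂ hτ (by positivity)
  exact ⟨K, L, hK, hL, μ₁, μ₂, hμ₁, hμ₂, by rw [h₁, h₂, ← smul_add, ← hsum, hμ]⟩

/-- Representation lemma: a simple distribution μ with Q_2(μ) = m/n ∈ (1/(k+1), 1/k]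
is a mixture (1-τ)·(average of K uniform-on-(k+1)-separated-points measures)
+ τ·(average of L uniform-on-k-separated-points measures), τ = k(k+1)m/n - k. -/
theorem representation_lemma (μ : Measure ℝ) [IsProbabilityMeasure μ]
    (hsimple : ∃ s : Finset ℝ, μ (↑s)ᶜ = 0 ∧ ∀ y : ℝ, ∃ q : ℚ, μ {y} = ENNReal.ofReal (q : ℝ))
    (m n k : ℕ) (hk : 1 ≤ k)
    (hQ : conc μ 2 = ENNReal.ofReal ((m : ℝ) / n))
    (hrange : (m : ℝ) / n ∈ Set.Ioc (1 / ((k : ℝ) + 1)) (1 / (k : ℝ))) :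
    ∃ (K L : ℕ), 0 < K ∧ 0 < L ∧
    ∃ (μ₁ : Fin K → Measure ℝ) (μ₂ : Fin L → Measure ℝ),
      (∀ l, IsUniformSep (k + 1) (μ₁ l)) ∧ (∀ l, IsUniformSep k (μ₂ l)) ∧
      μ = ENNReal.ofReal (1 - ((k : ℝ) * (k + 1) * m / n - k)) •
            ((K : ℝ≥0∞)⁻¹ • ∑ l, μ₁ l)
        + ENNReal.ofReal ((k : ℝ) * (k + 1) * m / n - k) •
            ((L : ℝ≥0∞)⁻¹ • ∑ l, μ₂ l) :=
  representation_lemma_general μ hsimple m n k hQ hrange
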